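/- arXiv:2007.10834 — 5 statements merged into one kernel-verified Lean document; each statement's English description precedes it below -/
import Mathlib

section
/- Let 0 < γ₁ < γ₂ with γ₁γ₂ = 2δ/(λm₂) and γ₂ − γ₁ = 2θm₁/m₂ (λ, θ, δ, m₁, m₂ > 0), and let b_D = (2/(γ₁+γ₂))·ln(γ₂/γ₁). Define V_D(x) = (1/(γ₁+γ₂))(γ₁/γ₂)^{(γ₁−γ₂)/(γ₁+γ₂)}(e^{γ₁x} − e^{−γ₂x}) on [0,b_D] and V_D(x) = θλm₁/δ + (x − b_D) for x > b_D. Then V_D(x) > x for all x > 0. -/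
/-!
On `[0, b_D]` write `u = x - b_D`; the choice of `b_D` turns `V_D` into
`((γ₂/γ₁) e^{γ₁u} - (γ₁/γ₂) e^{-γ₂u}) / (γ₁+γ₂)`, whose derivative
`(γ₂ e^{γ₁u} + γ₁ e^{-γ₂u}) / (γ₁+γ₂)` exceeds `1` for `u ≠ 0` by `e^y > 1 + y`.
So `V_D(x) - x` is strictly increasing there and vanishes at `0`.
Beyond `b_D`, the root relations give `θλm₁/δ = (γ₂-γ₁)/(γ₁γ₂)`, and this exceeds `b_D`
because `y < sinh y` for `y = log (γ₂/γ₁) > 0`.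
-/

open Real Set

namespace OptimalDividend

variable {g1 g2 : ℝ}

noncomputable def barrier (g1 g2 : ℝ) : ℝ := 2 / (g1 + g2) * log (g2 / g1)

noncomputable def profile (g1 g2 x : ℝ) : ℝ :=
  1 / (g1 + g2) * (g1 / g2) ^ ((g1 - g2) / (g1 + g2)) * (exp (g1 * x) - exp (-g2 * x))

lemma profile_eq_shift (hg1 : 0 < g1) (hg2 : 0 < g2) (x : ℝ) :
    profile g1 g2 x = (g2 / g1 * exp (g1 * (x - barrier g1 g2))
      - g1 / g2 * exp (-g2 * (x - barrier g1 g2))) / (g1 + g2) := by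
  set L := log (g2 / g1)
  have hr : g2 / g1 = exp L := (exp_log (div_pos hg2 hg1)).symm
  have hr' : g1 / g2 = exp (-L) := by rw [exp_neg, ← hr, inv_div]
  have hs : g1 + g2 ≠ 0 := by positivity
  have e1 : L + g1 * (x - barrier g1 g2) = -L * ((g1 - g2) / (g1 + g2)) + g1 * x := by
    rw [barrier]; field_simp; ring
  have e2 : -L + -g2 * (x - barrier g1 g2) = -L * ((g1 - g2) / (g1 + g2)) + -g2 * x := by
    rw [barrier]; field_simp; ring
  rw [profile, hr', hr, ← exp_mul, ← exp_add, ← exp_add, e1, e2, exp_add, exp_add]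
  ring

lemma one_lt_weighted_exp_mean (hg1 : 0 < g1) (hg2 : 0 < g2) {u : ℝ} (hu : u ≠ 0) :
    1 < (g2 * exp (g1 * u) + g1 * exp (-g2 * u)) / (g1 + g2) := by
  rw [one_lt_div (by positivity)]
  have h1 := add_one_lt_exp (mul_ne_zero hg1.ne' hu)
  have h2 := add_one_lt_exp (mul_ne_zero (neg_ne_zero.mpr hg2.ne') hu)
  nlinarith [mul_lt_mul_of_pos_left h1 hg2, mul_lt_mul_of_pos_left h2 hg1]

lemma hasDerivAt_profile (hg1 : 0 < g1) (hg2 : 0 < g2) (x : ℝ) :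
    HasDerivAt (profile g1 g2) ((g2 * exp (g1 * (x - barrier g1 g2))
      + g1 * exp (-g2 * (x - barrier g1 g2))) / (g1 + g2)) x := by
  rw [funext (profile_eq_shift hg1 hg2)]
  have hu := (hasDerivAt_id' x).sub_const (barrier g1 g2)
  refine ((((hu.const_mul g1).exp.const_mul (g2 / g1)).fun_sub
    ((hu.const_mul (-g2)).exp.const_mul (g1 / g2))).div_const (g1 + g2)).congr_deriv ?_
  field_simp
  ring

lemma strictMonoOn_profile_sub_id (hg1 : 0 < g1) (hg2 : 0 < g2) :
    StrictMonoOn (fun x => profile g1 g2 x - x) (Iic (barrier g1 g2)) := by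
  have hd (x : ℝ) : HasDerivAt (fun x => profile g1 g2 x - x) _ x :=
    (hasDerivAt_profile hg1 hg2 x).sub (hasDerivAt_id' x)
  refine strictMonoOn_of_deriv_pos (convex_Iic _)
    (fun x _ => (hd x).continuousAt.continuousWithinAt) fun x hx => ?_
  rw [interior_Iic] at hx
  rw [(hd x).deriv]
  linarith [one_lt_weighted_exp_mean hg1 hg2 (sub_ne_zero.mpr (ne_of_lt hx))]

lemma lt_profile (hg1 : 0 < g1) (hg2 : 0 < g2) {x : ℝ} (hx : 0 < x) (hxb : x ≤ barrier g1 g2) :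
    x < profile g1 g2 x := by
  have := strictMonoOn_profile_sub_id hg1 hg2 (hx.le.trans hxb) hxb hx
  have h0 : profile g1 g2 0 = 0 := by simp [profile]
  simp only [h0, sub_zero] at this
  linarith

lemma two_mul_log_lt_sub_inv {t : ℝ} (ht : 1 < t) : 2 * log t < t - t⁻¹ := by
  have := self_lt_sinh_iff.mpr (log_pos ht)
  rw [sinh_log (by linarith)] at this
  linarith

lemma barrier_lt_sub_div_mul (hg1 : 0 < g1) (hg12 : g1 < g2) :
    barrier g1 g2 < (g2 - g1) / (g1 * g2) := by
  have hg2 := hg1.trans hg12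
  calc barrier g1 g2 = 2 * log (g2 / g1) / (g1 + g2) := by rw [barrier]; ring
    _ < (g2 / g1 - (g2 / g1)⁻¹) / (g1 + g2) :=
        div_lt_div_of_pos_right (two_mul_log_lt_sub_inv ((one_lt_div hg1).mpr hg12)) (by positivity)
    _ = (g2 - g1) / (g1 * g2) := by field_simp; ring

lemma drift_div_discount_eq {lam th del m1 m2 : ℝ}
    (hprod : g1 * g2 = 2 * del / (lam * m2)) (hdiff : g2 - g1 = 2 * th * m1 / m2)
    (hg : g1 * g2 ≠ 0) : th * lam * m1 / del = (g2 - g1) / (g1 * g2) := by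
  obtain ⟨hdel, hlm⟩ := div_ne_zero_iff.mp (hprod ▸ hg)
  have hm2 : m2 ≠ 0 := right_ne_zero_of_mul hlm
  have hlam : lam ≠ 0 := left_ne_zero_of_mul hlm
  rw [hprod, hdiff]
  field_simp

end OptimalDividend

open OptimalDividend in
theorem VD_gt_x_general (lam th del m1 m2 : ℝ)
    (g1 g2 : ℝ) (hg1 : 0 < g1) (hg12 : g1 < g2)
    (hprod : g1 * g2 = 2 * del / (lam * m2))
    (hdiff : g2 - g1 = 2 * th * m1 / m2)
    (bD : ℝ) (hbD : bD = (2 / (g1 + g2)) * Real.log (g2 / g1))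
    (VD : ℝ → ℝ)
    (hVD : ∀ x, VD x = if x ≤ bD then
        (1 / (g1 + g2)) * (g1 / g2) ^ ((g1 - g2) / (g1 + g2)) *
          (Real.exp (g1 * x) - Real.exp (-g2 * x))
      else th * lam * m1 / del + (x - bD)) :
    ∀ x > 0, VD x > x := by
  have hg2 : 0 < g2 := hg1.trans hg12
  change bD = barrier g1 g2 at hbD
  intro x hx
  rw [hVD x]
  split_ifs with hxb
  · exact lt_profile hg1 hg2 hx (hbD ▸ hxb)
  · rw [drift_div_discount_eq hprod hdiff (by positivity)]
    linarith [barrier_lt_sub_div_mul hg1 hg12]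

theorem VD_gt_x (lam th del m1 m2 : ℝ)
    (hlam : 0 < lam) (hth : 0 < th) (hdel : 0 < del) (hm1 : 0 < m1) (hm2 : 0 < m2)
    (g1 g2 : ℝ) (hg1 : 0 < g1) (hg12 : g1 < g2)
    (hprod : g1 * g2 = 2 * del / (lam * m2))
    (hdiff : g2 - g1 = 2 * th * m1 / m2)
    (bD : ℝ) (hbD : bD = (2 / (g1 + g2)) * Real.log (g2 / g1))
    (VD : ℝ → ℝ)
    (hVD : ∀ x, VD x = if x ≤ bD then
        (1 / (g1 + g2)) * (g1 / g2) ^ ((g1 - g2) / (g1 + g2)) *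
          (Real.exp (g1 * x) - Real.exp (-g2 * x))
      else th * lam * m1 / del + (x - bD)) :
    ∀ x > 0, VD x > x :=
  VD_gt_x_general lam th del m1 m2 g1 g2 hg1 hg12 hprod hdiff bD hbD VD hVD
end

section
/- Under the hypotheses of the previous statement, the strict inequality θλm₁/δ > b_D holds, where b_D = (2/(γ₁+γ₂))·ln(γ₂/γ₁). -/
/-!
With `t = γ₂/γ₁`, the two relations give `θλm₁/δ = 1/γ₁ - 1/γ₂`, while `b_D = 2 log t / (γ₁ + γ₂)`.
The claim is thus `2 log t < t - 1/t`, i.e. `log t < sinh (log t)`, which holds since `log t > 0`: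
the harmonic mean of `γ₁, γ₂` lies below their logarithmic mean.
-/

open Real

lemma Real.two_mul_log_lt_sub_inv {t : ℝ} (ht : 1 < t) : 2 * log t < t - t⁻¹ := by
  have h := self_lt_sinh_iff.2 (log_pos ht)
  rw [sinh_log (by linarith)] at h
  linarith

lemma Real.two_div_add_mul_log_div_lt_inv_sub_inv {a b : ℝ} (ha : 0 < a) (hab : a < b) :
    2 / (a + b) * log (b / a) < a⁻¹ - b⁻¹ := by
  have hb : 0 < b := ha.trans hab
  have hlog := two_mul_log_lt_sub_inv ((one_lt_div ha).2 hab)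
  calc 2 / (a + b) * log (b / a) = (2 * log (b / a)) / (a + b) := by ring
    _ < (b / a - (b / a)⁻¹) / (a + b) := by gcongr
    _ = a⁻¹ - b⁻¹ := by field_simp; ring

theorem perpetuity_gt_barrier_general (lam th del m1 m2 : ℝ)
    (g1 g2 : ℝ) (hg1 : 0 < g1) (hg12 : g1 < g2)
    (hprod : g1 * g2 = 2 * del / (lam * m2))
    (hdiff : g2 - g1 = 2 * th * m1 / m2)
    (bD : ℝ) (hbD : bD = (2 / (g1 + g2)) * Real.log (g2 / g1)) :
    th * lam * m1 / del > bD := by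
  have hg2 : 0 < g2 := hg1.trans hg12
  -- `lam * m2 = 0` would force `g1 * g2 = 0` through the junk value of division.
  have hlm : lam * m2 ≠ 0 := by
    rintro h
    rw [h, div_zero] at hprod
    exact (mul_pos hg1 hg2).ne' hprod
  have hlam : lam ≠ 0 := left_ne_zero_of_mul hlm
  have hm2 : m2 ≠ 0 := right_ne_zero_of_mul hlm
  have hdel : del = g1 * g2 * (lam * m2) / 2 := by
    rw [hprod]; field_simp
  have hthm : th * m1 = (g2 - g1) * m2 / 2 := by
    rw [hdiff]; field_simp
  have hperpetuity : th * lam * m1 / del = g1⁻¹ - g2⁻¹ := by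
    rw [hdel, show th * lam * m1 = lam * (th * m1) by ring, hthm]
    field_simp
  rw [hperpetuity, hbD]
  exact two_div_add_mul_log_div_lt_inv_sub_inv hg1 hg12

theorem perpetuity_gt_barrier (lam th del m1 m2 : ℝ)
    (hlam : 0 < lam) (hth : 0 < th) (hdel : 0 < del) (hm1 : 0 < m1) (hm2 : 0 < m2)
    (g1 g2 : ℝ) (hg1 : 0 < g1) (hg12 : g1 < g2)
    (hprod : g1 * g2 = 2 * del / (lam * m2))
    (hdiff : g2 - g1 = 2 * th * m1 / m2)
    (bD : ℝ) (hbD : bD = (2 / (g1 + g2)) * Real.log (g2 / g1)) :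
    th * lam * m1 / del > bD :=
  perpetuity_gt_barrier_general lam th del m1 m2 g1 g2 hg1 hg12 hprod hdiff bD hbD
end

section
/- Let 0 < γ₁ < γ₂ and b_D = (2/(γ₁+γ₂))·ln(γ₂/γ₁), and define V_D(x) = (e^{γ₁x} − e^{−γ₂x})/(γ₁ e^{γ₁b_D} + γ₂ e^{−γ₂b_D}) on [0, b_D]. Then V_D'(x) ≥ 1 for all x ∈ [0, b_D], with equality only at x = b_D; moreover V_D is strictly concave on [0,b_D]. -/
/-!
Write `F x = g1 e^{g1 x} + g2 e^{-g2 x}`, so that `V_D' = F / F b_D`. Since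
`F' x = g1² e^{g1 x} - g2² e^{-g2 x}` is negative exactly when `(g1 + g2) x < 2 log (g2 / g1)`,
i.e. when `x < b_D`, the derivative `V_D'` is strictly decreasing on `(-∞, b_D]` with value `1`
at `b_D`: this gives both `V_D' ≥ 1` with equality only at `b_D` and strict concavity.
-/

open Real Set

theorem hasDerivAt_exp_const_mul (c x : ℝ) :
    HasDerivAt (fun x => exp (c * x)) (c * exp (c * x)) x := by
  simpa [mul_comm] using ((hasDerivAt_id x).const_mul c).exp

section TwoExponentials

variable (a b : ℝ)

theorem hasDerivAt_exp_sub_exp_neg (x : ℝ) :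
    HasDerivAt (fun x => exp (a * x) - exp (-b * x)) (a * exp (a * x) + b * exp (-b * x)) x :=
  ((hasDerivAt_exp_const_mul a x).sub (hasDerivAt_exp_const_mul (-b) x)).congr_deriv (by ring)

theorem hasDerivAt_mul_exp_add_mul_exp_neg (x : ℝ) :
    HasDerivAt (fun x => a * exp (a * x) + b * exp (-b * x))
      (a ^ 2 * exp (a * x) - b ^ 2 * exp (-b * x)) x :=
  (((hasDerivAt_exp_const_mul a x).const_mul a).add
    ((hasDerivAt_exp_const_mul (-b) x).const_mul b)).congr_deriv (by ring)

variable {a b}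

theorem sq_mul_exp_lt_sq_mul_exp_neg (ha : 0 < a) (hb : 0 < b) {x : ℝ}
    (hx : (a + b) * x < 2 * log (b / a)) :
    a ^ 2 * exp (a * x) < b ^ 2 * exp (-b * x) := by
  rw [← exp_log (pow_pos ha 2), ← exp_log (pow_pos hb 2), ← exp_add, ← exp_add, exp_lt_exp,
    log_pow, log_pow]
  rw [log_div hb.ne' ha.ne'] at hx
  push_cast
  linarith

theorem strictAntiOn_mul_exp_add_mul_exp_neg (ha : 0 < a) (hb : 0 < b) :
    StrictAntiOn (fun x => a * exp (a * x) + b * exp (-b * x))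
      (Iic (2 / (a + b) * log (b / a))) := by
  refine strictAntiOn_of_deriv_neg (convex_Iic _) (by fun_prop) fun x hx => ?_
  rw [interior_Iic, mem_Iio] at hx
  have hx' : (a + b) * x < 2 * log (b / a) := by
    have hab : 0 < a + b := add_pos ha hb
    calc (a + b) * x < (a + b) * (2 / (a + b) * log (b / a)) := by gcongr
      _ = 2 * log (b / a) := by field_simp
  rw [(hasDerivAt_mul_exp_add_mul_exp_neg a b x).deriv, sub_neg]
  exact sq_mul_exp_lt_sq_mul_exp_neg ha hb hx'

end TwoExponentials

theorem VD_deriv_ge_one_strict_concave (g1 g2 : ℝ) (hg1 : 0 < g1) (hg12 : g1 < g2)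
    (bD : ℝ) (hbD : bD = (2 / (g1 + g2)) * Real.log (g2 / g1))
    (VD : ℝ → ℝ)
    (hVD : ∀ x, VD x = (Real.exp (g1 * x) - Real.exp (-g2 * x)) /
      (g1 * Real.exp (g1 * bD) + g2 * Real.exp (-g2 * bD))) :
    (∀ x ∈ Icc (0:ℝ) bD, 1 ≤ deriv VD x) ∧
    (∀ x ∈ Icc (0:ℝ) bD, deriv VD x = 1 → x = bD) ∧
    StrictConcaveOn ℝ (Icc (0:ℝ) bD) VD := by
  have hg2 : 0 < g2 := hg1.trans hg12
  set F : ℝ → ℝ := fun x => g1 * exp (g1 * x) + g2 * exp (-g2 * x)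
  have hC : 0 < F bD := by positivity
  have hVD_eq : VD = fun x => (exp (g1 * x) - exp (-g2 * x)) / F bD := funext hVD
  have hderiv : deriv VD = fun x => F x / F bD := funext fun x => by
    rw [hVD_eq]
    exact ((hasDerivAt_exp_sub_exp_neg g1 g2 x).div_const _).deriv
  have hanti : StrictAntiOn (deriv VD) (Iic bD) := fun x hx y hy hxy => by
    rw [hderiv]
    exact div_lt_div_of_pos_right (strictAntiOn_mul_exp_add_mul_exp_neg hg1 hg2
      (hbD ▸ hx) (hbD ▸ hy) hxy) hC
  have hderiv_bD : deriv VD bD = 1 := by simp only [hderiv, div_self hC.ne']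
  refine ⟨fun x hx => ?_, fun x hx h1 => ?_, ?_⟩
  · exact hderiv_bD ▸ hanti.antitoneOn hx.2 self_mem_Iic hx.2
  · exact hanti.injOn hx.2 self_mem_Iic (h1.trans hderiv_bD.symm)
  · refine (hanti.mono (interior_subset.trans Icc_subset_Iic_self)).strictConcaveOn_of_deriv
      (convex_Icc 0 bD) ?_
    rw [hVD_eq]
    fun_prop
end

section
/- Fix n ≥ 1, λ, θ, δ > 0, a positive random variable Y with distribution F_Y, and b_D > 0. Define the operator G_n on C¹ functions by G_n(x,u) = (nλ+δ)u(x) − λ(√n+θ)E[Y]u'(x) − nλ∫₀^{√n x} u(x − t/√n) dF_Y(t). Suppose u, v ∈ C¹([0,b_D]) satisfy (i) u(0) ≤ v(0), (ii) G_n(x,u) ≤ G_n(x,v) for all x ∈ (0,b_D], and (iii) u'(b_D) = v'(b_D). Then u(x) ≤ v(x) for all x ∈ [0, b_D]. -/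
open Real MeasureTheory Set

/-- The scaled integro-differential operator `G_n` of the dividend problem:
`G_n(x,u) = (nλ+δ)u(x) − λ(√n+θ)E[Y]u'(x) − nλ∫₀^{√n x} u(x − t/√n) dF_Y(t)`,
where `μ` is the law of the claim `Y`. -/
noncomputable def Gop (n lam th del : ℝ) (μ : Measure ℝ) (u : ℝ → ℝ) (x : ℝ) : ℝ :=
  (n * lam + del) * u x - lam * (Real.sqrt n + th) * (∫ y, y ∂μ) * deriv u x
    - n * lam * ∫ t in Ioc 0 (Real.sqrt n * x), u (x - t / Real.sqrt n) ∂μ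

/-
At a positive maximum `x₀` of `w = u - v` the derivative term of `G_n(x₀, w)` vanishes and the
integral term only sees values `w(x₀ - t/√n) ≤ w(x₀)` against a sub-probability mass, so
`G_n(x₀, u) - G_n(x₀, v) = G_n(x₀, w) ≥ δ w(x₀) > 0`. The maximum is not at `0` because
`w(0) ≤ 0`; at an interior point `w'(x₀) = 0` by Fermat, at `b_D` by hypothesis.
-/

lemma integrableOn_Ioc_comp_sub_div {f : ℝ → ℝ} (hf : Continuous f) (μ : Measure ℝ)
    [IsFiniteMeasure μ] (x s a : ℝ) :
    IntegrableOn (fun t => f (x - t / s)) (Ioc 0 a) μ :=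
  (hf.comp (continuous_const.sub (continuous_id.div_const s))).integrableOn_Ioc

lemma setIntegral_le_of_forall_le {α : Type*} [MeasurableSpace α] {μ : Measure α}
    [IsProbabilityMeasure μ] {f : α → ℝ} {s : Set α} {c : ℝ}
    (hf : IntegrableOn f s μ) (hs : MeasurableSet s) (hfc : ∀ t ∈ s, f t ≤ c) (hc : 0 ≤ c) :
    ∫ t in s, f t ∂μ ≤ c :=
  calc ∫ t in s, f t ∂μ ≤ ∫ _ in s, c ∂μ := setIntegral_mono_on hf integrableOn_const hs hfc
    _ = μ.real s * c := setIntegral_const c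
    _ ≤ c := mul_le_of_le_one_left hc measureReal_le_one

lemma Gop_sub {n lam th del x : ℝ} {μ : Measure ℝ} [IsFiniteMeasure μ] {u v : ℝ → ℝ}
    (hu : Continuous u) (hv : Continuous v)
    (hdu : DifferentiableAt ℝ u x) (hdv : DifferentiableAt ℝ v x) :
    Gop n lam th del μ (fun y => u y - v y) x =
      Gop n lam th del μ u x - Gop n lam th del μ v x := by
  unfold Gop
  rw [deriv_fun_sub hdu hdv, integral_sub (integrableOn_Ioc_comp_sub_div hu μ _ _ _)
    (integrableOn_Ioc_comp_sub_div hv μ _ _ _)]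
  ring

lemma Gop_pos_of_isMaxOn {n lam th del b x₀ : ℝ} {μ : Measure ℝ} [IsProbabilityMeasure μ]
    {w : ℝ → ℝ} (hn : 0 < n) (hlam : 0 ≤ lam) (hdel : 0 < del) (hw : Continuous w)
    (hx₀ : x₀ ∈ Icc 0 b) (hmax : IsMaxOn w (Icc 0 b) x₀) (hpos : 0 < w x₀)
    (hderiv : deriv w x₀ = 0) :
    0 < Gop n lam th del μ w x₀ := by
  have hsn : 0 < √n := Real.sqrt_pos.2 hn
  have hshift : ∀ t ∈ Ioc 0 (√n * x₀), w (x₀ - t / √n) ≤ w x₀ := fun t ht => by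
    have hle : t / √n ≤ x₀ := (div_le_iff₀ hsn).2 (by linarith [ht.2])
    have hgt : 0 < t / √n := div_pos ht.1 hsn
    exact hmax ⟨by linarith, by linarith [hx₀.2]⟩
  have hint : ∫ t in Ioc 0 (√n * x₀), w (x₀ - t / √n) ∂μ ≤ w x₀ :=
    setIntegral_le_of_forall_le (integrableOn_Ioc_comp_sub_div hw μ _ _ _) measurableSet_Ioc
      hshift hpos.le
  have hnl : n * lam * ∫ t in Ioc 0 (√n * x₀), w (x₀ - t / √n) ∂μ ≤ n * lam * w x₀ :=
    mul_le_mul_of_nonneg_left hint (mul_nonneg hn.le hlam)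
  unfold Gop
  rw [hderiv]
  nlinarith [mul_pos hdel hpos]

theorem comparison_lemma_general (n lam th del : ℝ) (hn : 1 ≤ n)
    (hlam : 0 < lam) (hdel : 0 < del)
    (μ : Measure ℝ) [IsProbabilityMeasure μ]
    (bD : ℝ)
    (u v : ℝ → ℝ) (hu : ContDiff ℝ 1 u) (hv : ContDiff ℝ 1 v)
    (h0 : u 0 ≤ v 0)
    (hG : ∀ x ∈ Ioc (0:ℝ) bD, Gop n lam th del μ u x ≤ Gop n lam th del μ v x)
    (hderiv : deriv u bD = deriv v bD) :
    ∀ x ∈ Icc (0:ℝ) bD, u x ≤ v x := by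
  intro x hx
  by_contra! hlt
  have hw : Continuous (fun y => u y - v y) := hu.continuous.sub hv.continuous
  have hdu : Differentiable ℝ u := hu.differentiable one_ne_zero
  have hdv : Differentiable ℝ v := hv.differentiable one_ne_zero
  obtain ⟨x₀, hx₀, hmax⟩ := isCompact_Icc.exists_isMaxOn ⟨x, hx⟩ hw.continuousOn
  have hw₀ : 0 < u x₀ - v x₀ := (sub_pos.2 hlt).trans_le (hmax hx)
  have hx₀pos : 0 < x₀ := hx₀.1.lt_of_ne fun h => by rw [← h] at hw₀; linarith
  have hderiv₀ : deriv (fun y => u y - v y) x₀ = 0 := by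
    rcases hx₀.2.lt_or_eq with hinterior | rfl
    · exact (hmax.isLocalMax (Icc_mem_nhds hx₀pos hinterior)).deriv_eq_zero
    · rw [deriv_fun_sub (hdu _) (hdv _), hderiv, sub_self]
  have hGpos := Gop_pos_of_isMaxOn (th := th) (μ := μ) (by linarith : 0 < n) hlam.le hdel hw
    hx₀ hmax hw₀ hderiv₀
  rw [Gop_sub hu.continuous hv.continuous (hdu _) (hdv _)] at hGpos
  linarith [hG x₀ ⟨hx₀pos, hx₀.2⟩]

theorem comparison_lemma (n lam th del : ℝ) (hn : 1 ≤ n)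
    (hlam : 0 < lam) (hth : 0 < th) (hdel : 0 < del)
    (μ : Measure ℝ) [IsProbabilityMeasure μ] (hpos : ∀ᵐ y ∂μ, 0 < y)
    (bD : ℝ) (hbD : 0 < bD)
    (u v : ℝ → ℝ) (hu : ContDiff ℝ 1 u) (hv : ContDiff ℝ 1 v)
    (h0 : u 0 ≤ v 0)
    (hG : ∀ x ∈ Ioc (0:ℝ) bD, Gop n lam th del μ u x ≤ Gop n lam th del μ v x)
    (hderiv : deriv u bD = deriv v bD) :
    ∀ x ∈ Icc (0:ℝ) bD, u x ≤ v x :=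
  comparison_lemma_general n lam th del hn hlam hdel μ bD u v hu hv h0 hG hderiv
end

section
/- With r₁(n), r₂(n) as in the previous statement and b_n = (1/(r₁+r₂))·ln( r₂²(√n − r₂) / (r₁²(√n + r₁)) ), one has lim_{n→∞} b_n = (2/(γ₁+γ₂))·ln(γ₂/γ₁) = b_D, where γ₁ = (1/2)(√(θ²+4δ/λ) − θ) and γ₂ = (1/2)(√(θ²+4δ/λ) + θ). Moreover, there exists a constant C > 0 such that |b_n − b_D| ≤ C/√n for all sufficiently large n. -/
/-!
Substituting `u = 1/√n` and `c = δ/λ`, both roots (and with them `b_n`) become functions of `u`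
that are smooth up to `u = 0`: dividing numerator and denominator of `r₁, r₂` by `λ√n` gives
`(√((θ + c u)² + 4c) ∓ (θ - c u)) / (2(1 + θ u))`, and the log argument of `b_n` is unchanged by
dividing `√n ∓ rᵢ` by `√n`. At `u = 0` the roots are `γ₁, γ₂` and the barrier is `b_D`.
A function differentiable at `0` moves by `O(u)`, which is the `C/√n` bound.
-/

open Real Filter Topology

theorem DifferentiableAt.exists_pos_eventually_abs_comp_sub_le {α : Type*} {F : ℝ → ℝ} {x₀ : ℝ}
    (hF : DifferentiableAt ℝ F x₀) {l : Filter α} {u : α → ℝ} (hu : Tendsto u l (𝓝 x₀)) :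
    ∃ C > 0, ∀ᶠ a in l, |F (u a) - F x₀| ≤ C * |u a - x₀| := by
  obtain ⟨C, hC, hO⟩ := hF.isBigO_sub.exists_pos
  refine ⟨C, hC, ?_⟩
  simpa only [Function.comp_def, Real.norm_eq_abs] using (hO.comp_tendsto hu).bound

noncomputable section

namespace ScaledBarrier

/-- `rᵢ(n) = rootᵢ θ (δ/λ) (1/√n)` and `b_n = barrier θ (δ/λ) (1/√n)`. -/
def disc (θ c u : ℝ) : ℝ := √((θ + c * u) ^ 2 + 4 * c)

def root₁ (θ c u : ℝ) : ℝ := (disc θ c u - (θ - c * u)) / (2 * (1 + θ * u))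

def root₂ (θ c u : ℝ) : ℝ := (disc θ c u + (θ - c * u)) / (2 * (1 + θ * u))

def barrier (θ c u : ℝ) : ℝ :=
  1 / (root₁ θ c u + root₂ θ c u) * log (root₂ θ c u ^ 2 * (1 - u * root₂ θ c u)
    / (root₁ θ c u ^ 2 * (1 + u * root₁ θ c u)))

variable (θ : ℝ) {c : ℝ}

theorem disc_zero : disc θ c 0 = √(θ ^ 2 + 4 * c) := by simp [disc]

theorem root₁_zero : root₁ θ c 0 = (√(θ ^ 2 + 4 * c) - θ) / 2 := by simp [root₁, disc_zero]

theorem root₂_zero : root₂ θ c 0 = (√(θ ^ 2 + 4 * c) + θ) / 2 := by simp [root₂, disc_zero]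

theorem abs_lt_sqrt_add_four_mul (hc : 0 < c) : |θ| < √(θ ^ 2 + 4 * c) := by
  rw [← sqrt_sq_eq_abs]
  exact sqrt_lt_sqrt (sq_nonneg θ) (by linarith)

theorem root₁_zero_pos (hc : 0 < c) : 0 < root₁ θ c 0 := by
  rw [root₁_zero, div_pos_iff_of_pos_right two_pos]
  linarith [le_abs_self θ, abs_lt_sqrt_add_four_mul θ hc]

theorem root₂_zero_pos (hc : 0 < c) : 0 < root₂ θ c 0 := by
  rw [root₂_zero, div_pos_iff_of_pos_right two_pos]
  linarith [neg_le_abs θ, abs_lt_sqrt_add_four_mul θ hc]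

theorem barrier_zero :
    barrier θ c 0 = 2 / (root₁ θ c 0 + root₂ θ c 0) * log (root₂ θ c 0 / root₁ θ c 0) := by
  simp only [barrier, zero_mul, sub_zero, add_zero, mul_one]
  rw [← div_pow, log_pow]
  ring

theorem differentiableAt_barrier_zero (hc : 0 < c) : DifferentiableAt ℝ (barrier θ c) 0 := by
  have h₁ := root₁_zero_pos θ hc
  have h₂ := root₂_zero_pos θ hc
  have hdisc : DifferentiableAt ℝ (disc θ c) 0 :=
    DifferentiableAt.sqrt (by fun_prop) (by positivity)
  have hr₁ : DifferentiableAt ℝ (root₁ θ c) 0 := by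
    unfold root₁; fun_prop (disch := norm_num)
  have hr₂ : DifferentiableAt ℝ (root₂ θ c) 0 := by
    unfold root₂; fun_prop (disch := norm_num)
  unfold barrier
  fun_prop (disch := simp [h₁.ne', h₂.ne', (add_pos h₁ h₂).ne'])

theorem barrier_inv_eq {s : ℝ} (hs : s ≠ 0) :
    barrier θ c s⁻¹ = 1 / (root₁ θ c s⁻¹ + root₂ θ c s⁻¹) * log (root₂ θ c s⁻¹ ^ 2
      * (s - root₂ θ c s⁻¹) / (root₁ θ c s⁻¹ ^ 2 * (s + root₁ θ c s⁻¹))) := by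
  set x := root₁ θ c s⁻¹
  set y := root₂ θ c s⁻¹
  rw [barrier, show s - y = s * (1 - s⁻¹ * y) by field_simp, show s + x = s * (1 + s⁻¹ * x) by
    field_simp, mul_left_comm (y ^ 2), mul_left_comm (x ^ 2), mul_div_mul_left _ _ hs]

variable {lam del n : ℝ}

theorem sqrt_eq_mul_disc (hlam : 0 < lam) (hn : 0 < n) :
    √((√n * lam * θ + del) ^ 2 + 4 * n * del * lam) = lam * √n * disc θ (del / lam) (√n)⁻¹ := by
  have hs : 0 < √n := sqrt_pos.2 hn
  rw [disc, ← sqrt_sq (by positivity : 0 ≤ lam * √n), ← sqrt_mul (by positivity)]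
  congr 1
  field_simp
  rw [sq_sqrt hn.le]
  ring

theorem root₁_inv_sqrt (hlam : 0 < lam) (hn : 0 < n) :
    root₁ θ (del / lam) (√n)⁻¹ = (√((√n * lam * θ + del) ^ 2 + 4 * n * del * lam)
      - (√n * lam * θ - del)) / (2 * lam * (√n + θ)) := by
  have hk : lam * √n ≠ 0 := by positivity
  rw [sqrt_eq_mul_disc θ hlam hn,
    show √n * lam * θ - del = lam * √n * (θ - del / lam * (√n)⁻¹) by field_simp,
    show 2 * lam * (√n + θ) = lam * √n * (2 * (1 + θ * (√n)⁻¹)) by field_simp,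
    ← mul_sub, mul_div_mul_left _ _ hk, root₁]

theorem root₂_inv_sqrt (hlam : 0 < lam) (hn : 0 < n) :
    root₂ θ (del / lam) (√n)⁻¹ = (√((√n * lam * θ + del) ^ 2 + 4 * n * del * lam)
      + (√n * lam * θ - del)) / (2 * lam * (√n + θ)) := by
  have hk : lam * √n ≠ 0 := by positivity
  rw [sqrt_eq_mul_disc θ hlam hn,
    show √n * lam * θ - del = lam * √n * (θ - del / lam * (√n)⁻¹) by field_simp,
    show 2 * lam * (√n + θ) = lam * √n * (2 * (1 + θ * (√n)⁻¹)) by field_simp,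
    ← mul_add, mul_div_mul_left _ _ hk, root₂]

end ScaledBarrier

end

open ScaledBarrier in
theorem barrier_convergence_general (lam th del : ℝ) (hlam : 0 < lam) (hdel : 0 < del)
    (r1 r2 b : ℝ → ℝ) (g1 g2 bD : ℝ)
    (hr1 : ∀ n > 0, r1 n = (Real.sqrt ((Real.sqrt n * lam * th + del) ^ 2 + 4 * n * del * lam)
        - (Real.sqrt n * lam * th - del)) / (2 * lam * (Real.sqrt n + th)))
    (hr2 : ∀ n > 0, r2 n = (Real.sqrt ((Real.sqrt n * lam * th + del) ^ 2 + 4 * n * del * lam)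
        + (Real.sqrt n * lam * th - del)) / (2 * lam * (Real.sqrt n + th)))
    (hb : ∀ n > 0, b n = (1 / (r1 n + r2 n)) *
        Real.log (r2 n ^ 2 * (Real.sqrt n - r2 n) / (r1 n ^ 2 * (Real.sqrt n + r1 n))))
    (hg1 : g1 = (1 / 2) * (Real.sqrt (th ^ 2 + 4 * del / lam) - th))
    (hg2 : g2 = (1 / 2) * (Real.sqrt (th ^ 2 + 4 * del / lam) + th))
    (hbD : bD = (2 / (g1 + g2)) * Real.log (g2 / g1)) :
    Tendsto b atTop (nhds bD) ∧
    ∃ C > 0, ∀ᶠ n in atTop, |b n - bD| ≤ C / Real.sqrt n := by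
  have hbF : ∀ᶠ n in atTop, b n = barrier th (del / lam) (√n)⁻¹ := by
    filter_upwards [eventually_gt_atTop 0] with n hn
    rw [hb n hn, hr1 n hn, hr2 n hn, ← root₁_inv_sqrt th hlam hn, ← root₂_inv_sqrt th hlam hn,
      barrier_inv_eq th (sqrt_pos.2 hn).ne']
  have hF0 : barrier th (del / lam) 0 = bD := by
    rw [barrier_zero, root₁_zero, root₂_zero, hbD, hg1, hg2, mul_div_assoc]
    ring_nf
  have hF := differentiableAt_barrier_zero th (div_pos hdel hlam)
  have hu : Tendsto (fun n : ℝ ↦ (√n)⁻¹) atTop (𝓝 0) :=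
    tendsto_inv_atTop_zero.comp tendsto_sqrt_atTop
  refine ⟨hF0 ▸ (hF.continuousAt.tendsto.comp hu).congr' (hbF.mono fun n h ↦ h.symm), ?_⟩
  obtain ⟨C, hC, hle⟩ := hF.exists_pos_eventually_abs_comp_sub_le hu
  refine ⟨C, hC, ?_⟩
  filter_upwards [hle, hbF] with n hn hbn
  rw [hbn, ← hF0]
  rwa [sub_zero, abs_inv, abs_of_nonneg (sqrt_nonneg n), ← div_eq_mul_inv] at hn

theorem barrier_convergence (lam th del : ℝ) (hlam : 0 < lam) (hth : 0 < th) (hdel : 0 < del)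
    (r1 r2 b : ℝ → ℝ) (g1 g2 bD : ℝ)
    (hr1 : ∀ n > 0, r1 n = (Real.sqrt ((Real.sqrt n * lam * th + del) ^ 2 + 4 * n * del * lam)
        - (Real.sqrt n * lam * th - del)) / (2 * lam * (Real.sqrt n + th)))
    (hr2 : ∀ n > 0, r2 n = (Real.sqrt ((Real.sqrt n * lam * th + del) ^ 2 + 4 * n * del * lam)
        + (Real.sqrt n * lam * th - del)) / (2 * lam * (Real.sqrt n + th)))
    (hb : ∀ n > 0, b n = (1 / (r1 n + r2 n)) *
        Real.log (r2 n ^ 2 * (Real.sqrt n - r2 n) / (r1 n ^ 2 * (Real.sqrt n + r1 n))))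
    (hg1 : g1 = (1 / 2) * (Real.sqrt (th ^ 2 + 4 * del / lam) - th))
    (hg2 : g2 = (1 / 2) * (Real.sqrt (th ^ 2 + 4 * del / lam) + th))
    (hbD : bD = (2 / (g1 + g2)) * Real.log (g2 / g1)) :
    Tendsto b atTop (nhds bD) ∧
    ∃ C > 0, ∀ᶠ n in atTop, |b n - bD| ≤ C / Real.sqrt n :=
  barrier_convergence_general lam th del hlam hdel r1 r2 b g1 g2 bD hr1 hr2 hb hg1 hg2 hbD
end
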